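/- Let y = (b, a, a, ..., a) ∈ ℕ^n with n ≥ 2 (first car has length b, the remaining n−1 cars have length a), and let x ∈ [m]^n where m = b + (n−1)a. If a does not divide b and b < (n−1)a, then x ∈ PAinv_n(y) if and only if: for every i ∈ [⌊b/a⌋ + 1], the i-th smallest entry x_{(i)} belongs to {1 + (k−1)a : k ∈ [i]}, and for every i with ⌊b/a⌋ + 1 < i ≤ n, x_{(i)} belongs to {1 + (k−1)a : k ∈ [⌊b/a⌋ + 1]}. -/

import Mathlib

/-- Car with preference `pref` and length `len` fits at spot `s`:
`pref ≤ s`, the spots `s, s+1, ..., s+len-1` all lie in the lot `[1, m]`,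
and none of them is occupied. -/
def FitsAt (occ : Finset ℕ) (m pref len s : ℕ) : Prop :=
  pref ≤ s ∧ s + len ≤ m + 1 ∧ ∀ t ∈ Finset.Ico s (s + len), t ∉ occ

/-- The car parks at `s`: `s` is the least spot (≥ its preference) where it fits. -/
def ParksAt (occ : Finset ℕ) (m pref len s : ℕ) : Prop :=
  FitsAt occ m pref len s ∧ ∀ s' < s, ¬ FitsAt occ m pref len s'

/-- Every car in the list of (preference, length) pairs can park, with
cars entering in order, starting from the set `occ` of occupied spots. -/
inductive Park (m : ℕ) : Finset ℕ → List (ℕ × ℕ) → Prop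
  | nil (occ : Finset ℕ) : Park m occ []
  | cons (occ : Finset ℕ) (pref len : ℕ) (rest : List (ℕ × ℕ)) (s : ℕ) :
      ParksAt occ m pref len s →
      Park m (occ ∪ Finset.Ico s (s + len)) rest →
      Park m occ ((pref, len) :: rest)

/-- `x` is a parking assortment for the length vector `y`. -/
def PA (y x : List ℕ) : Prop :=
  x.length = y.length ∧ (∀ v ∈ x, 1 ≤ v ∧ v ≤ y.sum) ∧ Park y.sum ∅ (x.zip y)

/-- `x` is a (permutation) invariant parking assortment for `y`. -/
def PAinv (y x : List ℕ) : Prop :=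
  ∀ x' : List ℕ, x.Perm x' → PA y x'

/-- The degree of `x`: the number of entries of `x` different from 1. -/
def deg (x : List ℕ) : ℕ := (x.filter (fun v => v ≠ 1)).length

/-- The characteristic of `y`: the greatest degree over all invariant
parking assortments for `y`. -/
noncomputable def chi (y : List ℕ) : ℕ := sSup {d | ∃ x, PAinv y x ∧ deg x = d}

/-- The invariant solution set of `y`. -/
def Wset (y : List ℕ) : Set ℕ :=
  {w | PAinv y (List.replicate (y.length - 1) 1 ++ [w])}

/-!
Write `m = b + (n - 1) a`. For necessity, permute `x` so that a chosen entry `w` comes first: the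
long car then occupies `[w, w + b)`, and all remaining free spots must be covered by short cars of
length `a`. A gap of free spots bounded by occupied ones is filled by whole short cars, so its
size is divisible by `a`; the gap `[1, w - 1]` shows that every entry is `≡ 1 (mod a)`. The first
`j a` spots can only be filled by cars preferring them, so at least `j` entries are `≤ j a`; in
particular `1` is an entry. Putting `1` first and an entry `w > b` second leaves the gap
`[b + 1, w - 1]` of size `≡ -b (mod a)`, so `a ∤ b` forces every entry to be `≤ b`.

For sufficiency, after the long car parks at `1 + k a` the free spots split into `n - 1` blocks of
length `a` with no preference strictly inside a block, so each short car takes the first free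
block at or after its preference. A Hall-type condition (for every preference `p`, at least as
many blocks start at or after `p` as there are cars preferring `≥ p`) is preserved by each step
and guarantees that every car finds a block; the counting conditions supply it.
-/

open Finset

section Mechanics

variable {occ : Finset ℕ} {m p len s : ℕ} {rest : List (ℕ × ℕ)}

theorem ParksAt.unique {s' : ℕ} (h : ParksAt occ m p len s) (h' : ParksAt occ m p len s') :
    s = s' := by
  by_contra hne
  rcases Nat.lt_or_gt_of_ne hne with hlt | hlt
  · exact h'.2 s hlt h.1
  · exact h.2 s' hlt h'.1

theorem ParksAt.of_fitsAt (hlen : 0 < len) (hfit : FitsAt occ m p len s)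
    (hocc : ∀ t, p ≤ t → t < s → t ∈ occ) : ParksAt occ m p len s :=
  ⟨hfit, fun t ht hfit' => hfit'.2.2 t (mem_Ico.2 ⟨le_rfl, by omega⟩) (hocc t hfit'.1 ht)⟩

theorem parksAt_self (hfree : ∀ t, p ≤ t → t ∉ occ) (hm : p + len ≤ m + 1) :
    ParksAt occ m p len p :=
  ⟨⟨le_rfl, hm, fun t ht => hfree t (mem_Ico.1 ht).1⟩, fun _ ht hfit => by
    have := hfit.1; omega⟩

theorem FitsAt.Ico_subset (h : FitsAt occ m p len s) (hp : 1 ≤ p) :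
    Ico s (s + len) ⊆ Icc 1 m \ occ := fun t ht => by
  have := mem_Ico.1 ht
  have := h.1; have := h.2.1
  exact mem_sdiff.2 ⟨mem_Icc.2 ⟨by omega, by omega⟩, h.2.2 t ht⟩

theorem sdiff_union_eq_sdiff_sdiff {α : Type*} [DecidableEq α] (X Y Z : Finset α) :
    X \ (Y ∪ Z) = (X \ Y) \ Z :=
  sdiff_sdiff_left.symm

theorem sdiff_union_of_disjoint {α : Type*} [DecidableEq α] {X Y Z : Finset α}
    (h : Disjoint X Z) : X \ (Y ∪ Z) = X \ Y := by
  rw [sdiff_union_eq_sdiff_sdiff,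
    sdiff_eq_self_of_disjoint (disjoint_of_subset_left sdiff_subset h)]

theorem card_sdiff_union_Ico {X : Finset ℕ} (h : Ico s (s + len) ⊆ X \ occ) :
    #(X \ (occ ∪ Ico s (s + len))) = #(X \ occ) - len := by
  rw [sdiff_union_eq_sdiff_sdiff, card_sdiff_of_subset h, Nat.card_Ico, Nat.add_sub_cancel_left]

theorem Park.exists_of_cons (h : Park m occ ((p, len) :: rest)) :
    ∃ s, ParksAt occ m p len s ∧ Park m (occ ∪ Ico s (s + len)) rest := by
  cases h with
  | cons _ _ _ _ s hs hrest => exact ⟨s, hs, hrest⟩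

theorem Park.of_cons_of_free (h : Park m occ ((p, len) :: rest))
    (hfree : ∀ t, p ≤ t → t ∉ occ) :
    FitsAt occ m p len p ∧ Park m (occ ∪ Ico p (p + len)) rest := by
  obtain ⟨s, hs, hrest⟩ := h.exists_of_cons
  have hself : ParksAt occ m p len p :=
    parksAt_self hfree (by have := hs.1.1; have := hs.1.2.1; omega)
  exact ⟨hself.1, hself.unique hs ▸ hrest⟩

end Mechanics

section EqualCars

variable {m a : ℕ}

theorem Park.induction_on_free {P : Finset ℕ → List ℕ → Prop}
    (nil : ∀ occ, Icc 1 m ⊆ occ → P occ [])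
    (cons : ∀ occ p l s, p ≤ s → Ico s (s + a) ⊆ Icc 1 m \ occ →
      P (occ ∪ Ico s (s + a)) l → P occ (p :: l)) :
    ∀ {l : List ℕ} {occ : Finset ℕ}, Park m occ (l.map (·, a)) → (∀ p ∈ l, 1 ≤ p) →
      #(Icc 1 m \ occ) = a * l.length → P occ l
  | [], occ, _, _, hcard => nil occ (sdiff_eq_empty_iff_subset.1 (card_eq_zero.1 hcard))
  | p :: l, occ, h, hl, hcard => by
    obtain ⟨s, hs, hrest⟩ := h.exists_of_cons
    have hI := hs.1.Ico_subset (hl p List.mem_cons_self)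
    refine cons occ p l s hs.1.1 hI (Park.induction_on_free nil cons hrest
      (fun q hq => hl q (List.mem_cons_of_mem p hq)) ?_)
    rw [card_sdiff_union_Ico hI, hcard, List.length_cons, Nat.mul_succ, Nat.add_sub_cancel]

theorem Park.dvd_card_free {l : List ℕ} {occ : Finset ℕ} {u v : ℕ}
    (h : Park m occ (l.map (·, a))) (hl : ∀ p ∈ l, 1 ≤ p)
    (hcard : #(Icc 1 m \ occ) = a * l.length) (hu : 1 ≤ u) (hv : v ≤ m)
    (hu' : u = 1 ∨ u - 1 ∈ occ) (hv' : v = m ∨ v + 1 ∈ occ) :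
    a ∣ #(Icc u v \ occ) := by
  revert hu' hv'
  refine Park.induction_on_free (P := fun occ _ => (u = 1 ∨ u - 1 ∈ occ) →
    (v = m ∨ v + 1 ∈ occ) → a ∣ #(Icc u v \ occ)) ?_ ?_ h hl hcard
  · intro occ hocc _ _
    rw [sdiff_eq_empty_iff_subset.2 ((Icc_subset_Icc hu hv).trans hocc), card_empty]
    exact dvd_zero a
  · intro occ p l s _ hI ih hu' hv'
    have hfree : ∀ t ∈ Ico s (s + a), 1 ≤ t ∧ t ≤ m ∧ t ∉ occ := fun t ht => by
      obtain ⟨htm, hto⟩ := mem_sdiff.1 (hI ht)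
      exact ⟨(mem_Icc.1 htm).1, (mem_Icc.1 htm).2, hto⟩
    have ih' := ih (hu'.imp_right (mem_union_left _)) (hv'.imp_right (mem_union_left _))
    -- a free interval cannot cross the occupied (or outer) boundary of `[u, v]`
    by_cases hdisj : s + a ≤ u ∨ v < s
    · rwa [sdiff_union_of_disjoint (disjoint_left.2 fun t ht ht' => by
        have := mem_Icc.1 ht; have := mem_Ico.1 ht'; omega)] at ih'
    · have hsub : Ico s (s + a) ⊆ Icc u v \ occ := fun t ht => by
        have ht' := mem_Ico.1 ht
        refine mem_sdiff.2 ⟨mem_Icc.2 ⟨?_, ?_⟩, (hfree t ht).2.2⟩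
        · by_contra hlt
          rcases hu' with rfl | hocc
          · exact absurd (hfree t ht).1 (by omega)
          · exact (hfree (u - 1) (mem_Ico.2 ⟨by omega, by omega⟩)).2.2 hocc
        · by_contra hlt
          rcases hv' with rfl | hocc
          · exact absurd (hfree t ht).2.1 (by omega)
          · exact (hfree (v + 1) (mem_Ico.2 ⟨by omega, by omega⟩)).2.2 hocc
      rw [card_sdiff_union_Ico hsub] at ih'
      have hle : a ≤ #(Icc u v \ occ) := by simpa using card_le_card hsub
      exact (Nat.dvd_sub_iff_left hle (dvd_refl a)).1 ih'

theorem Park.card_free_le {l : List ℕ} {occ : Finset ℕ} {E : ℕ}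
    (h : Park m occ (l.map (·, a))) (hl : ∀ p ∈ l, 1 ≤ p)
    (hcard : #(Icc 1 m \ occ) = a * l.length) (hE : E ≤ m) :
    #(Icc 1 E \ occ) ≤ a * l.countP (· ≤ E) := by
  refine Park.induction_on_free (P := fun occ l => #(Icc 1 E \ occ) ≤ a * l.countP (· ≤ E))
    ?_ ?_ h hl hcard
  · intro occ hocc
    rw [sdiff_eq_empty_iff_subset.2 ((Icc_subset_Icc le_rfl hE).trans hocc), card_empty]
    exact Nat.zero_le _
  · intro occ p l s hps _ ih
    have hsplit := card_le_card_sdiff_add_card (s := Icc 1 E \ occ) (t := Ico s (s + a))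
    rw [← sdiff_union_eq_sdiff_sdiff (Icc 1 E), Nat.card_Ico, Nat.add_sub_cancel_left] at hsplit
    rw [List.countP_cons]
    by_cases hsE : s ≤ E
    · rw [if_pos (by simpa using hps.trans hsE), Nat.mul_add, Nat.mul_one]
      omega
    · rw [sdiff_union_of_disjoint (disjoint_left.2 fun t ht ht' => by
        have := mem_Icc.1 ht; have := mem_Ico.1 ht'; omega)] at ih
      exact ih.trans (Nat.mul_le_mul_left a (Nat.le_add_right _ _))

end EqualCars

section Blocks

variable {m a : ℕ} {f : ℕ → ℕ}

theorem le_of_separated (hf : ∀ i j, i < j → f i + a ≤ f j) {i j : ℕ} (h : i ≤ j) :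
    f i ≤ f j := by
  rcases h.eq_or_lt with rfl | h
  · exact le_rfl
  · have := hf i j h; omega

theorem eq_of_mem_Ico_of_separated (hf : ∀ i j, i < j → f i + a ≤ f j) {i j t : ℕ}
    (hi : t ∈ Ico (f i) (f i + a)) (hj : t ∈ Ico (f j) (f j + a)) : i = j := by
  have := mem_Ico.1 hi; have := mem_Ico.1 hj
  by_contra hne
  rcases Nat.lt_or_gt_of_ne hne with h | h
  · have := hf i j h; omega
  · have := hf j i h; omega

variable {occ I : Finset ℕ} {p i₀ : ℕ}

theorem sdiff_union_block_eq_biUnion (hf : ∀ i j, i < j → f i + a ≤ f j)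
    (hfree : Icc 1 m \ occ = I.biUnion fun i => Ico (f i) (f i + a)) :
    Icc 1 m \ (occ ∪ Ico (f i₀) (f i₀ + a)) =
      (I.erase i₀).biUnion fun i => Ico (f i) (f i + a) := by
  ext t
  rw [sdiff_union_eq_sdiff_sdiff, mem_sdiff, hfree]
  simp only [mem_biUnion, mem_erase]
  constructor
  · rintro ⟨⟨i, hi, ht⟩, ht₀⟩
    exact ⟨i, ⟨fun h => ht₀ (h ▸ ht), hi⟩, ht⟩
  · rintro ⟨i, ⟨hne, hi⟩, ht⟩
    exact ⟨⟨i, hi, ht⟩, fun ht₀ => hne (eq_of_mem_Ico_of_separated hf ht ht₀)⟩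

theorem parksAt_first_block (ha : 0 < a)
    (hfree : Icc 1 m \ occ = I.biUnion fun i => Ico (f i) (f i + a)) (hp : 1 ≤ p)
    (hint : ∀ i ∈ I, f i < p → f i + a ≤ p) (hi₀ : i₀ ∈ I) (hpi₀ : p ≤ f i₀)
    (hmin : ∀ i ∈ I, p ≤ f i → f i₀ ≤ f i) : ParksAt occ m p a (f i₀) := by
  have hblock : Ico (f i₀) (f i₀ + a) ⊆ Icc 1 m \ occ :=
    hfree ▸ subset_biUnion_of_mem (fun i => Ico (f i) (f i + a)) hi₀
  have hend := mem_Icc.1 (mem_sdiff.1 (hblock (mem_Ico.2 (⟨by omega, by omega⟩ :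
    f i₀ ≤ f i₀ + a - 1 ∧ f i₀ + a - 1 < f i₀ + a)))).1
  refine ParksAt.of_fitsAt ha ⟨hpi₀, by omega, fun t ht => (mem_sdiff.1 (hblock ht)).2⟩ ?_
  intro t hpt hts
  by_contra hocc
  have ht : t ∈ Icc 1 m \ occ := mem_sdiff.2 ⟨mem_Icc.2 ⟨by omega, by omega⟩, hocc⟩
  rw [hfree, mem_biUnion] at ht
  obtain ⟨i, hi, hti⟩ := ht
  have := mem_Ico.1 hti
  by_cases hpi : p ≤ f i
  · have := hmin i hi hpi; omega
  · have := hint i hi (by omega); omega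

theorem hall_condition_erase {l : List ℕ}
    (hall : ∀ q ∈ p :: l, (p :: l).countP (q ≤ ·) ≤ #{i ∈ I | q ≤ f i})
    (hmin : ∀ i ∈ I, p ≤ f i → f i₀ ≤ f i) :
    ∀ q ∈ l, l.countP (q ≤ ·) ≤ #{i ∈ I.erase i₀ | q ≤ f i} := by
  intro q hq
  have hq' := hall q (List.mem_cons_of_mem p hq)
  rw [List.countP_cons] at hq'
  rw [filter_erase, card_erase_eq_ite]
  split_ifs with h₀
  · have hqi₀ : q ≤ f i₀ := (mem_filter.1 h₀).2
    by_cases hqp : q ≤ p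
    · rw [if_pos (by simpa using hqp)] at hq'
      omega
    · have hp := hall p List.mem_cons_self
      rw [List.countP_cons, if_pos (by simp)] at hp
      have hsub : {i ∈ I | p ≤ f i} ⊆ {i ∈ I | q ≤ f i} := fun i hi => by
        rw [mem_filter] at hi ⊢
        exact ⟨hi.1, hqi₀.trans (hmin i hi.1 hi.2)⟩
      have hcount : l.countP (q ≤ ·) ≤ l.countP (p ≤ ·) :=
        List.countP_mono_left fun v _ hv => by simp only [decide_eq_true_eq] at hv ⊢; omega
      have := card_le_card hsub
      omega
  · omega

theorem park_of_blocks (ha : 0 < a) (hf : ∀ i j, i < j → f i + a ≤ f j) :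
    ∀ {l : List ℕ} {occ I : Finset ℕ},
      Icc 1 m \ occ = I.biUnion (fun i => Ico (f i) (f i + a)) → (∀ p ∈ l, 1 ≤ p) →
      (∀ p ∈ l, ∀ i ∈ I, f i < p → f i + a ≤ p) →
      (∀ p ∈ l, l.countP (p ≤ ·) ≤ #{i ∈ I | p ≤ f i}) → Park m occ (l.map (·, a))
  | [], occ, _, _, _, _, _ => Park.nil occ
  | p :: l, occ, I, hfree, hl, hint, hall => by
    have hne : {i ∈ I | p ≤ f i}.Nonempty := card_pos.1 (by
      have := hall p List.mem_cons_self
      rw [List.countP_cons, if_pos (by simp)] at this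
      omega)
    obtain ⟨hi₀, hpi₀⟩ := mem_filter.1 (min'_mem _ hne)
    have hmin : ∀ i ∈ I, p ≤ f i → f (min' _ hne) ≤ f i := fun i hi hpi =>
      le_of_separated hf (min'_le _ _ (mem_filter.2 ⟨hi, hpi⟩))
    exact Park.cons _ _ _ _ _
      (parksAt_first_block ha hfree (hl p List.mem_cons_self) (hint p List.mem_cons_self)
        hi₀ hpi₀ hmin)
      (park_of_blocks ha hf (sdiff_union_block_eq_biUnion hf hfree)
        (fun q hq => hl q (List.mem_cons_of_mem p hq))
        (fun q hq i hi => hint q (List.mem_cons_of_mem p hq) i (mem_of_mem_erase hi))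
        (hall_condition_erase hall hmin))

end Blocks

section LongCarFirst

variable {n a b : ℕ} {x : List ℕ}

theorem sum_cons_replicate : (b :: List.replicate (n - 1) a).sum = b + (n - 1) * a := by
  simp [List.sum_replicate, Nat.mul_comm]

theorem zip_replicate_length (l : List ℕ) (c : ℕ) :
    l.zip (List.replicate l.length c) = l.map (·, c) := by
  induction l with
  | nil => rfl
  | cons v l ih => simp [List.replicate_succ, ih]

theorem PAinv.length_eq (h : PAinv (b :: List.replicate (n - 1) a) x) :
    x.length = n - 1 + 1 := by
  simpa using (h x (List.Perm.refl x)).1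

theorem PAinv.mem_bounds (h : PAinv (b :: List.replicate (n - 1) a) x) {v : ℕ} (hv : v ∈ x) :
    1 ≤ v ∧ v ≤ b + (n - 1) * a :=
  sum_cons_replicate (n := n) ▸ (h x (List.Perm.refl x)).2.1 v hv

theorem PAinv.park_after_first (h : PAinv (b :: List.replicate (n - 1) a) x) {w : ℕ}
    {l : List ℕ} (hperm : x.Perm (w :: l)) :
    Park (b + (n - 1) * a) (Ico w (w + b)) (l.map (·, a)) ∧
      #(Icc 1 (b + (n - 1) * a) \ Ico w (w + b)) = a * l.length := by
  obtain ⟨hlen, hbounds, hpark⟩ := h _ hperm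
  have hl : l.length = n - 1 := by simpa using hlen
  have hzip : (w :: l).zip (b :: List.replicate (n - 1) a) = (w, b) :: l.map (·, a) := by
    rw [List.zip_cons_cons, ← hl, zip_replicate_length]
  rw [sum_cons_replicate, hzip] at hpark
  obtain ⟨hfit, hrest⟩ := hpark.of_cons_of_free fun t _ => notMem_empty t
  rw [empty_union] at hrest
  have hI := hfit.Ico_subset (hbounds w List.mem_cons_self).1
  rw [sdiff_empty] at hI
  refine ⟨hrest, ?_⟩
  rw [card_sdiff_of_subset hI, Nat.card_Icc, Nat.card_Ico, hl, Nat.mul_comm a]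
  omega

theorem PAinv.one_le_of_sublist (h : PAinv (b :: List.replicate (n - 1) a) x) {l : List ℕ}
    (hl : l.Sublist x) : ∀ p ∈ l, 1 ≤ p :=
  fun _ hp => (h.mem_bounds (hl.subset hp)).1

theorem PAinv.dvd_sub_one (h : PAinv (b :: List.replicate (n - 1) a) x) (hb : 0 < b) {v : ℕ}
    (hv : v ∈ x) : a ∣ v - 1 := by
  obtain ⟨hpark, hcard⟩ := h.park_after_first (List.perm_cons_erase hv)
  have hv1 := h.mem_bounds hv
  have := hpark.dvd_card_free (h.one_le_of_sublist (List.erase_sublist)) hcard le_rfl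
    (v := v - 1) (by omega) (Or.inl rfl) (Or.inr (mem_Ico.2 ⟨by omega, by omega⟩))
  rwa [sdiff_eq_self_of_disjoint (disjoint_left.2 fun t ht ht' => by
    have := mem_Icc.1 ht; have := mem_Ico.1 ht'; omega), Nat.card_Icc, Nat.add_sub_cancel] at this

theorem PAinv.le_countP (h : PAinv (b :: List.replicate (n - 1) a) x) (ha : 0 < a) {j : ℕ}
    (hj : j ≤ n - 1) : j ≤ x.countP (· ≤ j * a) := by
  by_contra! hlt
  obtain ⟨w, hw, hwj⟩ : ∃ w ∈ x, ¬ w ≤ j * a := by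
    by_contra! hall
    have := List.countP_eq_length.2 fun v hv => decide_eq_true (hall v hv)
    have := h.length_eq
    omega
  obtain ⟨hpark, hcard⟩ := h.park_after_first (List.perm_cons_erase hw)
  have hfree := hpark.card_free_le (E := j * a) (h.one_le_of_sublist List.erase_sublist) hcard
    (by have := Nat.mul_le_mul_right a hj; omega)
  rw [sdiff_eq_self_of_disjoint (disjoint_left.2 fun t ht ht' => by
    have := mem_Icc.1 ht; have := mem_Ico.1 ht'; omega), Nat.card_Icc, Nat.add_sub_cancel] at hfree
  have hcount := (List.erase_sublist (a := w) (l := x)).countP_le (p := (· ≤ j * a))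
  have := Nat.mul_le_mul_left a (show (x.erase w).countP (· ≤ j * a) ≤ j - 1 by omega)
  have : a * (j - 1) < j * a := by
    rw [Nat.mul_comm, Nat.sub_one_mul]; exact Nat.sub_lt (Nat.mul_pos (by omega) ha) ha
  omega

theorem PAinv.one_mem (h : PAinv (b :: List.replicate (n - 1) a) x) (ha : 0 < a) (hb : 0 < b)
    (hn : 1 ≤ n - 1) : 1 ∈ x := by
  have h1 := h.le_countP ha hn
  rw [Nat.one_mul] at h1
  obtain ⟨u, hu, hua⟩ := List.countP_pos_iff.1 h1
  have hu1 := (h.mem_bounds hu).1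
  have : u - 1 = 0 := Nat.eq_zero_of_dvd_of_lt (h.dvd_sub_one hb hu) (by simp at hua; omega)
  rwa [show u = 1 by omega] at hu

theorem PAinv.le_of_mem (h : PAinv (b :: List.replicate (n - 1) a) x) (ha : 0 < a)
    (hnd : ¬ a ∣ b) (hone : 1 ∈ x) {v : ℕ} (hv : v ∈ x) : v ≤ b := by
  have hb : 0 < b := Nat.pos_of_ne_zero fun hb => hnd (hb ▸ dvd_zero a)
  by_contra! hvb
  have hvx : v ∈ x.erase 1 := (List.mem_erase_of_ne (by omega)).2 hv
  obtain ⟨hpark, hcard⟩ := h.park_after_first ((List.perm_cons_erase hone).trans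
    ((List.perm_cons_erase hvx).cons 1))
  obtain ⟨hfit, hrest⟩ := hpark.of_cons_of_free fun t ht ht' => by
    have := mem_Ico.1 ht'; omega
  have hI := hfit.Ico_subset (h.mem_bounds hv).1
  have hv' := h.mem_bounds hv
  have := hrest.dvd_card_free
    (h.one_le_of_sublist ((List.erase_sublist).trans List.erase_sublist))
    (by rw [card_sdiff_union_Ico hI, hcard, List.length_cons, Nat.mul_succ, Nat.add_sub_cancel])
    (u := b + 1) (v := v - 1) (by omega) (by omega)
    (Or.inr (mem_union_left _ (mem_Ico.2 ⟨by omega, by omega⟩)))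
    (Or.inr (mem_union_right _ (mem_Ico.2 ⟨by omega, by omega⟩)))
  rw [sdiff_eq_self_of_disjoint (disjoint_left.2 fun t ht ht' => by
    have := mem_Icc.1 ht; rw [mem_union, mem_Ico, mem_Ico] at ht'; omega), Nat.card_Icc,
    show v - 1 + 1 - (b + 1) = v - 1 - b by omega] at this
  exact hnd ((Nat.dvd_sub_iff_right (by omega) (h.dvd_sub_one hb hv)).1 this)

end LongCarFirst

section FreeBlocks

variable {n a b k i t : ℕ}

/-- Once a car of length `b` occupies `[1 + k a, k a + b]`, the free spots of the lot
`[1, b + (n - 1) a]` are the `n - 1` blocks `[freeBlockStart a b k i, freeBlockStart a b k i + a)`,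
`i < n - 1`. -/
def freeBlockStart (a b k i : ℕ) : ℕ := 1 + i * a + if k ≤ i then b else 0

theorem freeBlockStart_add_le {j : ℕ} (h : i < j) :
    freeBlockStart a b k i + a ≤ freeBlockStart a b k j := by
  have := Nat.mul_le_mul_right a (Nat.succ_le_of_lt h)
  rw [Nat.succ_mul] at this
  unfold freeBlockStart
  split_ifs <;> omega

theorem freeBlockStart_add_le_of_lt (ht : t * a ≤ b) (h : freeBlockStart a b k i < 1 + t * a) :
    freeBlockStart a b k i + a ≤ 1 + t * a := by
  unfold freeBlockStart at h ⊢
  split_ifs at h ⊢ with hki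
  · omega
  · have := Nat.mul_le_mul_right a (Nat.succ_le_of_lt (Nat.lt_of_mul_lt_mul_right (a := a)
      (show i * a < t * a by omega)))
    rw [Nat.succ_mul] at this
    omega

theorem card_filter_freeBlockStart (ha : 0 < a) (ht : t * a ≤ b) :
    #{i ∈ range (n - 1) | 1 + t * a ≤ freeBlockStart a b k i} = n - 1 - min t k := by
  have : {i ∈ range (n - 1) | 1 + t * a ≤ freeBlockStart a b k i} = Ico (min t k) (n - 1) := by
    ext i
    rw [mem_filter, mem_range, mem_Ico]
    unfold freeBlockStart
    split_ifs with hki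
    · omega
    · rw [Nat.add_zero, Nat.add_le_add_iff_left, Nat.mul_le_mul_right_iff ha]
      omega
  rw [this, Nat.card_Ico]

theorem Icc_sdiff_Ico_eq_biUnion (ha : 0 < a) (hk : k ≤ n - 1) :
    Icc 1 (b + (n - 1) * a) \ Ico (1 + k * a) (1 + k * a + b) =
      (range (n - 1)).biUnion fun i =>
        Ico (freeBlockStart a b k i) (freeBlockStart a b k i + a) := by
  have hka := Nat.mul_le_mul_right a hk
  ext t
  simp only [mem_sdiff, mem_Icc, mem_Ico, mem_biUnion, mem_range, freeBlockStart]
  constructor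
  · rintro ⟨⟨ht1, htm⟩, ht⟩
    by_cases htk : t < 1 + k * a
    · have h1 := Nat.div_mul_le_self (t - 1) a
      have h2 := Nat.lt_div_mul_add (a := t - 1) ha
      have hik : (t - 1) / a < k := Nat.lt_of_mul_lt_mul_right (a := a) (by omega)
      exact ⟨(t - 1) / a, by omega, by rw [if_neg (by omega)]; omega⟩
    · have h1 := Nat.div_mul_le_self (t - 1 - b) a
      have h2 := Nat.lt_div_mul_add (a := t - 1 - b) ha
      have hki : k ≤ (t - 1 - b) / a := Nat.le_of_lt_succ (Nat.lt_of_mul_lt_mul_right (a := a)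
        (by rw [Nat.succ_mul]; omega))
      have hin : (t - 1 - b) / a < n - 1 := Nat.lt_of_mul_lt_mul_right (a := a) (by omega)
      exact ⟨(t - 1 - b) / a, hin, by rw [if_pos hki]; omega⟩
  · rintro ⟨i, hi, hti⟩
    have := Nat.mul_le_mul_right a (Nat.succ_le_of_lt hi)
    rw [Nat.succ_mul] at this
    split_ifs at hti with hki
    · have := Nat.mul_le_mul_right a hki
      omega
    · have := Nat.mul_le_mul_right a (Nat.succ_le_of_lt (Nat.lt_of_not_le hki))
      rw [Nat.succ_mul] at this
      omega

end FreeBlocks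

section Characterization

theorem List.countP_one_add_mul_le {l : List ℕ} {a t j : ℕ} (hjt : j ≤ t)
    (hj : j ≤ l.countP (· ≤ j * a)) : l.countP (1 + t * a ≤ ·) ≤ l.length - j := by
  have hmono : l.countP (· ≤ j * a) ≤ l.countP fun v => ¬ (1 + t * a ≤ v) :=
    List.countP_mono_left fun v _ hv => by
      have := Nat.mul_le_mul_right a hjt
      simp only [decide_eq_true_eq] at hv ⊢
      omega
  have := l.length_eq_countP_add_countP (1 + t * a ≤ ·)
  simp only [decide_eq_true_eq] at this
  omega

variable {n a b : ℕ} {x : List ℕ}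

theorem pAinv_of_forall (ha : 0 < a) {q : ℕ} (hq : q * a ≤ b) (hqn : q < n - 1)
    (hx : x.length = n) (hform : ∀ v ∈ x, ∃ t ≤ q, v = 1 + t * a)
    (hcount : ∀ j ≤ q, j ≤ x.countP (· ≤ j * a)) :
    PAinv (b :: List.replicate (n - 1) a) x := by
  intro x' hperm
  have hform' : ∀ v ∈ x', ∃ t ≤ q, v = 1 + t * a := fun v hv => hform v (hperm.mem_iff.2 hv)
  have hbound : ∀ t ≤ q, t * a ≤ b := fun t ht => (Nat.mul_le_mul_right a ht).trans hq
  have hna : a ≤ (n - 1) * a := Nat.le_mul_of_pos_left a (by omega)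
  obtain ⟨w, rest, rfl⟩ := List.exists_cons_of_length_pos
    (show 0 < x'.length by rw [← hperm.length_eq, hx]; omega)
  obtain ⟨k, hk, rfl⟩ := hform' _ List.mem_cons_self
  have hrest : rest.length = n - 1 := by
    have := hperm.length_eq
    simp only [hx, List.length_cons] at this
    omega
  refine ⟨by simp [hrest], fun v hv => ?_, ?_⟩
  · obtain ⟨t, ht, rfl⟩ := hform' v hv
    rw [sum_cons_replicate]
    have := hbound t ht
    omega
  rw [sum_cons_replicate, List.zip_cons_cons, ← hrest, zip_replicate_length, hrest]
  refine Park.cons _ _ _ _ _ (parksAt_self (fun t _ => notMem_empty t)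
    (by have := Nat.mul_le_mul_right a (show k ≤ n - 1 by omega); omega)) ?_
  rw [empty_union]
  refine park_of_blocks ha (fun i j => freeBlockStart_add_le) (Icc_sdiff_Ico_eq_biUnion ha
    (by omega)) (fun p hp => ?_) (fun p hp i _ => ?_) (fun p hp => ?_) <;>
    obtain ⟨t, ht, rfl⟩ := hform' p (List.mem_cons_of_mem _ hp)
  · omega
  · exact freeBlockStart_add_le_of_lt (hbound t ht)
  rw [card_filter_freeBlockStart ha (hbound t ht), ← hrest]
  refine List.countP_one_add_mul_le (min_le_left t k) ?_
  have hc := hcount (min t k) (by omega)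
  have := Nat.mul_le_mul_right a (min_le_right t k)
  rwa [hperm.countP_eq, List.countP_cons, if_neg (by simp; omega), Nat.add_zero] at hc

theorem pAinv_cons_replicate_iff (ha : 0 < a) (hnd : ¬ a ∣ b) (hlt : b < (n - 1) * a)
    (hx : x.length = n) :
    PAinv (b :: List.replicate (n - 1) a) x ↔
      (∀ v ∈ x, ∃ t ≤ b / a, v = 1 + t * a) ∧
        ∀ j ≤ b / a, j ≤ x.countP (· ≤ j * a) := by
  have hb : 0 < b := Nat.pos_of_ne_zero fun hb => hnd (hb ▸ dvd_zero a)
  have hq : b / a < n - 1 := (Nat.div_lt_iff_lt_mul ha).2 hlt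
  constructor
  · intro h
    refine ⟨fun v hv => ?_, fun j hj => h.le_countP ha (hj.trans hq.le)⟩
    have hvb := h.le_of_mem ha hnd (h.one_mem ha hb (Nat.zero_lt_of_lt hq)) hv
    obtain ⟨t, ht⟩ := h.dvd_sub_one hb hv
    have := (h.mem_bounds hv).1
    exact ⟨t, (Nat.le_div_iff_mul_le ha).2 (by rw [Nat.mul_comm]; omega), by
      rw [Nat.mul_comm]; omega⟩
  · exact fun ⟨hform, hcount⟩ =>
      pAinv_of_forall ha (Nat.div_mul_le_self b a) hq hx hform hcount

end Characterization

section Sorted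

theorem List.getD_le_iff_lt_countP {xs : List ℕ} (hs : xs.Pairwise (· ≤ ·)) {i B : ℕ}
    (hi : i < xs.length) : xs.getD i 0 ≤ B ↔ i < xs.countP (· ≤ B) := by
  induction xs generalizing i with
  | nil => simp at hi
  | cons y ys ih =>
    rw [List.pairwise_cons] at hs
    rw [List.countP_cons]
    by_cases hy : y ≤ B
    · rw [if_pos (by simpa using hy)]
      cases i with
      | zero => simpa using hy
      | succ i =>
        rw [List.getD_cons_succ, ih hs.2 (by simpa using hi)]
        omega
    · have hys : ys.countP (· ≤ B) = 0 :=
        List.countP_eq_zero.2 fun z hz => by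
          have := hs.1 z hz
          simp only [decide_eq_true_eq]
          omega
      rw [if_neg (by simpa using hy), hys]
      cases i with
      | zero => simpa using hy
      | succ i =>
        rw [List.getD_cons_succ, List.getD_eq_getElem _ _ (by simpa using hi)]
        have := hs.1 _ (List.getElem_mem (by simpa using hi))
        omega

theorem forall_getD_eq_one_add_mul_iff {a q : ℕ} (ha : 0 < a) {xs x : List ℕ}
    (hperm : xs.Perm x) (hs : xs.Pairwise (· ≤ ·)) (hq : q ≤ xs.length) :
    (∀ i < xs.length, ∃ t ≤ min i q, xs.getD i 0 = 1 + t * a) ↔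
      (∀ v ∈ x, ∃ t ≤ q, v = 1 + t * a) ∧ ∀ j ≤ q, j ≤ x.countP (· ≤ j * a) := by
  constructor
  · intro H
    refine ⟨fun v hv => ?_, fun j hj => ?_⟩
    · obtain ⟨i, hi, rfl⟩ := List.getElem_of_mem (hperm.mem_iff.2 hv)
      obtain ⟨t, ht, he⟩ := H i hi
      exact ⟨t, ht.trans (min_le_right i q), by rwa [List.getD_eq_getElem] at he⟩
    · rcases j with _ | i
      · exact Nat.zero_le _
      obtain ⟨t, ht, he⟩ := H i (by omega)
      rw [← hperm.countP_eq]
      refine (List.getD_le_iff_lt_countP hs (by omega)).1 ?_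
      have := Nat.mul_le_mul_right a (show t + 1 ≤ i + 1 by have := min_le_left i q; omega)
      rw [Nat.add_one_mul, Nat.add_one_mul] at this
      rw [he, Nat.add_one_mul]
      omega
  · rintro ⟨hform, hcount⟩ i hi
    obtain ⟨t, htq, he⟩ := hform (xs.getD i 0) (hperm.mem_iff.1 (by
      rw [List.getD_eq_getElem _ _ hi]; exact List.getElem_mem hi))
    refine ⟨t, le_min ?_ htq, he⟩
    by_contra! hti
    have hle := (List.getD_le_iff_lt_countP hs hi).2
      (by rw [hperm.countP_eq]; exact hcount (i + 1) (by omega))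
    have := Nat.mul_le_mul_right a (Nat.succ_le_of_lt hti)
    rw [he, Nat.add_one_mul] at hle
    rw [Nat.succ_mul] at this
    omega

end Sorted

theorem exists_sub_one_mul_iff {N v a : ℕ} :
    (∃ k, 1 ≤ k ∧ k ≤ N + 1 ∧ v = 1 + (k - 1) * a) ↔ ∃ t ≤ N, v = 1 + t * a :=
  ⟨fun ⟨k, _, hkN, hv⟩ => ⟨k - 1, by omega, hv⟩,
    fun ⟨t, ht, hv⟩ => ⟨t + 1, by omega, by omega, by simpa using hv⟩⟩

-- `xs` is the nondecreasing rearrangement of `x`, indexed from 0: the paper's `x_(i)` is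
-- `xs.getD (i - 1) 0`.
theorem stmt4_general (n a b : ℕ)
    (y : List ℕ) (hy : y = b :: List.replicate (n - 1) a)
    (x : List ℕ) (hxlen : x.length = n)
    (xs : List ℕ) (hperm : xs.Perm x) (hsort : xs.Pairwise (· ≤ ·))
    (hnd : ¬ a ∣ b) (hlt : b < (n - 1) * a) :
    PAinv y x ↔
      ∀ i < n,
        (i + 1 ≤ b / a + 1 →
          ∃ k, 1 ≤ k ∧ k ≤ i + 1 ∧ xs.getD i 0 = 1 + (k - 1) * a) ∧
        (b / a + 1 < i + 1 →
          ∃ k, 1 ≤ k ∧ k ≤ b / a + 1 ∧ xs.getD i 0 = 1 + (k - 1) * a) := by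
  have ha : 0 < a := Nat.pos_of_ne_zero fun ha => by simp [ha] at hlt
  have hxs : xs.length = n := hperm.length_eq.trans hxlen
  have hq : b / a ≤ xs.length :=
    hxs ▸ ((Nat.div_lt_iff_lt_mul ha).2 hlt).le.trans (Nat.sub_le n 1)
  subst hy
  rw [pAinv_cons_replicate_iff ha hnd hlt hxlen,
    ← forall_getD_eq_one_add_mul_iff ha hperm hsort hq, hxs]
  refine forall₂_congr fun i _ => ?_
  simp only [exists_sub_one_mul_iff]
  rcases le_or_gt i (b / a) with h | h
  · rw [min_eq_left h]
    exact ⟨fun H => ⟨fun _ => H, fun h' => absurd h' (by omega)⟩, fun H => H.1 (by omega)⟩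
  · rw [min_eq_right h.le]
    exact ⟨fun H => ⟨fun h' => absurd h' (by omega), fun _ => H⟩, fun H => H.2 (by omega)⟩

/-- for `y = (b, a^{n−1})` with `a ∤ b` and `b < (n−1)a`,
`x ∈ PAinv_n(y)` iff the `i`-th smallest entry lies in `{1+(k−1)a : k ∈ [i]}` for
`i ∈ [⌊b/a⌋+1]`, and in `{1+(k−1)a : k ∈ [⌊b/a⌋+1]}` for `⌊b/a⌋+1 < i ≤ n`.
Here `xs` is the nondecreasing rearrangement of `x` (0-based indexing, so the
paper's index `i` corresponds to `i + 1` below). -/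
theorem stmt4 (n a b : ℕ) (hn : 2 ≤ n) (ha : 0 < a) (hb : 0 < b)
    (y : List ℕ) (hy : y = b :: List.replicate (n - 1) a)
    (x : List ℕ) (hxlen : x.length = n)
    (hxm : ∀ v ∈ x, 1 ≤ v ∧ v ≤ b + (n - 1) * a)
    (xs : List ℕ) (hperm : xs.Perm x) (hsort : xs.Pairwise (· ≤ ·))
    (hnd : ¬ a ∣ b) (hlt : b < (n - 1) * a) :
    PAinv y x ↔
      ∀ i < n,
        (i + 1 ≤ b / a + 1 →
          ∃ k, 1 ≤ k ∧ k ≤ i + 1 ∧ xs.getD i 0 = 1 + (k - 1) * a) ∧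
        (b / a + 1 < i + 1 →
          ∃ k, 1 ≤ k ∧ k ≤ b / a + 1 ∧ xs.getD i 0 = 1 + (k - 1) * a) :=
  stmt4_general n a b y hy x hxlen xs hperm hsort hnd hlt
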